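/- Let G be a topological group acting on spaces S₂ and S₃ via a continuous homomorphism φ : G₂ → G₃ (G acting on S₃ through φ), and let f : S₂ → S₃ be a φ-equivariant Serre fibration. Then the induced map on Borel constructions ψ : S₂//G₂ → S₃//G₃, with appropriate models of the universal bundles, is a Serre fibration. -/

import Mathlib

open unitInterval

/-- The closed `i`-dimensional disc `Dⁱ`. -/
abbrev Disc (i : ℕ) := (Metric.closedBall (0 : EuclideanSpace ℝ (Fin i)) 1 :
    Set (EuclideanSpace ℝ (Fin i)))

/-- A continuous map is a *Serre fibration* if it has the homotopy lifting property with
respect to the inclusions `Dⁱ × {0} ↪ Dⁱ × I` for all `i ≥ 0`. -/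
def IsSerreFibration {X Y : Type*} [TopologicalSpace X] [TopologicalSpace Y] (f : X → Y) : Prop :=
  Continuous f ∧
  ∀ (i : ℕ) (H : C(Disc i × I, Y)) (h₀ : C(Disc i, X)),
    (∀ d, f (h₀ d) = H (d, 0)) →
    ∃ H' : C(Disc i × I, X), (∀ p, f (H' p) = H p) ∧ (∀ d, H' (d, 0) = h₀ d)

/-!
A map of quotients `ψ : X → Y` covered by a Serre fibration `q : A → B` between the total spaces
of two Serre fibrations `A → X`, `B → Y`, with `A → X` a quotient map, is a Serre fibration: lift
the initial disc through `A → X` (discs are contractible), lift the homotopy through `B → Y`, then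
through `q`, and project back to `X`. Here `A = S₂ × E₂ × E₃`, `B = S₃ × E₃` and
`q = f × pr₂`, a product of Serre fibrations.
-/

lemma Disc.smul_mem {i : ℕ} (t : I) (d : Disc i) :
    (t : ℝ) • (d : EuclideanSpace ℝ (Fin i)) ∈ Disc i :=
  (convex_closedBall _ _).smul_mem_of_zero_mem (Metric.mem_closedBall_self zero_le_one) d.2 t.2

def Disc.contraction (i : ℕ) : C(Disc i × I, Disc i) where
  toFun p := ⟨(p.2 : ℝ) • (p.1 : EuclideanSpace ℝ (Fin i)), Disc.smul_mem p.2 p.1⟩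
  continuous_toFun := by fun_prop

lemma Disc.contraction_zero {i : ℕ} (d : Disc i) :
    Disc.contraction i (d, 0) = ⟨0, Metric.mem_closedBall_self zero_le_one⟩ :=
  Subtype.ext (zero_smul ℝ _)

lemma Disc.contraction_one {i : ℕ} (d : Disc i) : Disc.contraction i (d, 1) = d :=
  Subtype.ext (one_smul ℝ _)

namespace IsSerreFibration

variable {X Y X' Y' : Type*} [TopologicalSpace X] [TopologicalSpace Y]
  [TopologicalSpace X'] [TopologicalSpace Y']

/-- Lift `d ↦ h (t • d)`, which starts at a constant map, and evaluate at `t = 1`. -/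
theorem exists_lift_disc {p : X → Y} (hp : IsSerreFibration p) (hsurj : Function.Surjective p)
    {i : ℕ} (h : C(Disc i, Y)) : ∃ ℓ : C(Disc i, X), ∀ d, p (ℓ d) = h d := by
  obtain ⟨x₀, hx₀⟩ := hsurj (h ⟨0, Metric.mem_closedBall_self zero_le_one⟩)
  obtain ⟨L, hL, -⟩ := hp.2 i (h.comp (Disc.contraction i)) (ContinuousMap.const _ x₀)
    fun d => by simp [hx₀, Disc.contraction_zero]
  exact ⟨L.comp ⟨fun d => (d, 1), by fun_prop⟩, fun d => by simp [hL, Disc.contraction_one]⟩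

theorem prodMap {f : X → Y} {g : X' → Y'} (hf : IsSerreFibration f) (hg : IsSerreFibration g) :
    IsSerreFibration (Prod.map f g) := by
  refine ⟨hf.1.prodMap hg.1, fun i H h₀ hH₀ => ?_⟩
  obtain ⟨K₁, hK₁, hK₁₀⟩ := hf.2 i (ContinuousMap.fst.comp H) (ContinuousMap.fst.comp h₀)
    fun d => congrArg Prod.fst (hH₀ d)
  obtain ⟨K₂, hK₂, hK₂₀⟩ := hg.2 i (ContinuousMap.snd.comp H) (ContinuousMap.snd.comp h₀)
    fun d => congrArg Prod.snd (hH₀ d)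
  exact ⟨K₁.prodMk K₂, fun p => Prod.ext (hK₁ p) (hK₂ p),
    fun d => Prod.ext (hK₁₀ d) (hK₂₀ d)⟩

theorem snd : IsSerreFibration (Prod.snd : X × Y → Y) :=
  ⟨continuous_snd, fun _ H h₀ hH₀ =>
    ⟨(ContinuousMap.fst.comp (h₀.comp ContinuousMap.fst)).prodMk H, fun _ => rfl,
      fun d => Prod.ext rfl (hH₀ d).symm⟩⟩

variable {A B : Type*} [TopologicalSpace A] [TopologicalSpace B]

theorem descend {pA : A → X} {pB : B → Y} {q : A → B} {ψ : X → Y}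
    (hpA : IsSerreFibration pA) (hpA_quot : Topology.IsQuotientMap pA)
    (hpB : IsSerreFibration pB) (hq : IsSerreFibration q) 
    (hcomm : ∀ a, ψ (pA a) = pB (q a)) : IsSerreFibration ψ := by
  have hψ : Continuous ψ := hpA_quot.continuous_iff.mpr <| by
    simpa only [Function.comp_def, hcomm] using hpB.1.comp hq.1
  refine ⟨hψ, fun i H h₀ hH₀ => ?_⟩
  obtain ⟨ℓ, hℓ⟩ := hpA.exists_lift_disc hpA_quot.surjective h₀
  obtain ⟨HB, hHB, hHB₀⟩ := hpB.2 i H ⟨fun d => q (ℓ d), hq.1.comp ℓ.continuous⟩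
    fun d => by simp [← hcomm, hℓ, hH₀]
  obtain ⟨HA, hHA, hHA₀⟩ := hq.2 i HB ℓ fun d => (hHB₀ d).symm
  exact ⟨⟨fun p => pA (HA p), hpA.1.comp HA.continuous⟩,
    fun p => by simp [hcomm, hHA, hHB], fun d => by simp [hHA₀, hℓ]⟩

end IsSerreFibration

theorem borel_construction_descent_serreFibration_general
    {G₂ G₃ : Type*} [Group G₂] [Group G₃]
    {S₂ S₃ : Type*} [TopologicalSpace S₂] [TopologicalSpace S₃]
    [MulAction G₂ S₂] [MulAction G₃ S₃]
    (φ : G₂ →* G₃)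
    (f : S₂ → S₃)
    (hf : IsSerreFibration f)
    -- models of the universal bundles: contractible free `G`-spaces with principal
    -- (in particular Serre-fibration) quotients
    (E₂ E₃ : Type*) [TopologicalSpace E₂] [TopologicalSpace E₃]
    [MulAction G₂ E₂] [MulAction G₃ E₃]
    (hp₂ : IsSerreFibration (Quot.mk fun a b : S₂ × E₂ × E₃ =>
      ∃ g : G₂, b = (g • a.1, g • a.2.1, φ g • a.2.2)))
    (hp₃ : IsSerreFibration (Quot.mk fun a b : S₃ × E₃ => ∃ g : G₃, b = (g • a.1, g • a.2)))
    -- the induced map on Borel constructions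
    (ψ : Quot (fun a b : S₂ × E₂ × E₃ => ∃ g : G₂, b = (g • a.1, g • a.2.1, φ g • a.2.2)) →
      Quot (fun a b : S₃ × E₃ => ∃ g : G₃, b = (g • a.1, g • a.2)))
    (hψ : ∀ (x : S₂) (e₂ : E₂) (e₃ : E₃),
      ψ (Quot.mk _ (x, e₂, e₃)) = Quot.mk _ (f x, e₃)) :
    IsSerreFibration ψ :=
  hp₂.descend isQuotientMap_quot_mk hp₃ (q := Prod.map f Prod.snd)
    (hf.prodMap IsSerreFibration.snd) fun a => hψ a.1 a.2.1 a.2.2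

/-- Descent of equivariant fibrations to Borel constructions: given a continuous
homomorphism `φ : G₂ → G₃` of topological groups, a `φ`-equivariant Serre fibration
`f : S₂ → S₃`, and models `E₂`, `E₃` of the universal bundles `EG₂`, `EG₃` (contractible
free spaces with principal quotients, here taking `E₂ × E₃` with the diagonal `G₂`-action,
through `φ` on the second factor, as a model for `EG₂`), the induced map of Borel
constructions `ψ : S₂ ⫽ G₂ = (S₂ × E₂ × E₃)/G₂ → (S₃ × E₃)/G₃ = S₃ ⫽ G₃` is a Serre
fibration. -/
theorem borel_construction_descent_serreFibration
    {G₂ G₃ : Type*} [Group G₂] [Group G₃] [TopologicalSpace G₂] [TopologicalSpace G₃]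
    [IsTopologicalGroup G₂] [IsTopologicalGroup G₃]
    {S₂ S₃ : Type*} [TopologicalSpace S₂] [TopologicalSpace S₃]
    [MulAction G₂ S₂] [MulAction G₃ S₃] [ContinuousSMul G₂ S₂] [ContinuousSMul G₃ S₃]
    (φ : G₂ →* G₃) (hφ : Continuous φ)
    (f : S₂ → S₃) (hequiv : ∀ (g : G₂) (x : S₂), f (g • x) = φ g • f x)
    (hf : IsSerreFibration f)
    -- models of the universal bundles: contractible free `G`-spaces with principal
    -- (in particular Serre-fibration) quotients
    (E₂ E₃ : Type*) [TopologicalSpace E₂] [TopologicalSpace E₃]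
    [MulAction G₂ E₂] [MulAction G₃ E₃] [ContinuousSMul G₂ E₂] [ContinuousSMul G₃ E₃]
    [ContractibleSpace E₂] [ContractibleSpace E₃]
    (hfree₂ : ∀ (g : G₂) (e : E₂), g • e = e → g = 1)
    (hfree₃ : ∀ (g : G₃) (e : E₃), g • e = e → g = 1)
    (hp₂ : IsSerreFibration (Quot.mk fun a b : S₂ × E₂ × E₃ =>
      ∃ g : G₂, b = (g • a.1, g • a.2.1, φ g • a.2.2)))
    (hp₃ : IsSerreFibration (Quot.mk fun a b : S₃ × E₃ => ∃ g : G₃, b = (g • a.1, g • a.2)))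
    -- the induced map on Borel constructions
    (ψ : Quot (fun a b : S₂ × E₂ × E₃ => ∃ g : G₂, b = (g • a.1, g • a.2.1, φ g • a.2.2)) →
      Quot (fun a b : S₃ × E₃ => ∃ g : G₃, b = (g • a.1, g • a.2)))
    (hψ : ∀ (x : S₂) (e₂ : E₂) (e₃ : E₃),
      ψ (Quot.mk _ (x, e₂, e₃)) = Quot.mk _ (f x, e₃)) :
    IsSerreFibration ψ :=
  borel_construction_descent_serreFibration_general φ f hf E₂ E₃ hp₂ hp₃ ψ hψ
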